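/- arXiv:1807.00022 — 7 statements merged into one kernel-verified Lean document; each statement's English description precedes it below -/
import Mathlib

section
/- Let L ≥ K ≥ 1 be integers and let M_1 ≤ M_2 ≤ ⋯ ≤ M_L be pairwise coprime positive integers. Let X and X' be natural numbers with X < ∏_{l=1}^{K} M_l and X' < ∏_{l=1}^{K} M_l, and let r̂_1, …, r̂_L be natural numbers. If the number of indices l ∈ {1,…,L} with X mod M_l ≠ r̂_l is at most ⌊(L−K)/2⌋, and the number of indices l with X' mod M_l ≠ r̂_l is also at most ⌊(L−K)/2⌋, then X = X'. (Uniqueness of decoding of the remainder code with up to ⌊(L−K)/2⌋ residue errors.) -/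
/-- Uniqueness of decoding for the remainder code: if two integers in the
legitimate range `[0, ∏_{l=1}^{K} M_l)` both agree with a received residue
vector up to at most `⌊(L-K)/2⌋` coordinate errors, they are equal. -/
theorem remainder_code_unique_decoding
    (L K : ℕ) (hK : 1 ≤ K) (hKL : K ≤ L)
    (M : ℕ → ℕ)
    (hMpos : ∀ l ∈ Finset.Icc 1 L, 0 < M l)
    (hMmono : ∀ l₁ ∈ Finset.Icc 1 L, ∀ l₂ ∈ Finset.Icc 1 L, l₁ ≤ l₂ → M l₁ ≤ M l₂)
    (hMcop : ∀ l₁ ∈ Finset.Icc 1 L, ∀ l₂ ∈ Finset.Icc 1 L,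
      l₁ ≠ l₂ → Nat.Coprime (M l₁) (M l₂))
    (X X' : ℕ)
    (hX : X < ∏ l ∈ Finset.Icc 1 K, M l)
    (hX' : X' < ∏ l ∈ Finset.Icc 1 K, M l)
    (r : ℕ → ℕ)
    (hE : ((Finset.Icc 1 L).filter (fun l => X % M l ≠ r l)).card ≤ (L - K) / 2)
    (hE' : ((Finset.Icc 1 L).filter (fun l => X' % M l ≠ r l)).card ≤ (L - K) / 2) :
    X = X' := by
  classical
  set E := (Finset.Icc 1 L).filter (fun l => X % M l ≠ r l) with hEdef
  set E' := (Finset.Icc 1 L).filter (fun l => X' % M l ≠ r l) with hE'def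
  set S := Finset.Icc 1 L \ (E ∪ E') with hSdef
  -- S has at least K elements
  have hScard : K ≤ S.card := by
    have h1 : (Finset.Icc 1 L).card - (E ∪ E').card ≤ S.card :=
      Finset.le_card_sdiff _ _
    have h2 : (E ∪ E').card ≤ E.card + E'.card := Finset.card_union_le _ _
    have h3 : (Finset.Icc 1 L).card = L := by simp
    omega
  obtain ⟨T, hTS, hTcard⟩ := Finset.exists_subset_card_eq hScard
  have hTL : T ⊆ Finset.Icc 1 L := hTS.trans (Finset.sdiff_subset)
  -- membership facts for S
  have hSagree : ∀ l ∈ S, X % M l = X' % M l := by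
    intro l hl
    rw [hSdef, Finset.mem_sdiff, Finset.mem_union, hEdef, hE'def] at hl
    simp only [Finset.mem_filter, not_or, not_and, not_not] at hl
    obtain ⟨hmem, h1, h2⟩ := hl
    rw [h1 hmem, h2 hmem]
  -- the i-th smallest element of T is at least i+1
  have hTorder := T.orderEmbOfFin hTcard
  set f := T.orderEmbOfFin hTcard with hfdef
  have hfmem : ∀ i, f i ∈ T := fun i => T.orderEmbOfFin_mem hTcard i
  have hflb : ∀ n (h : n < K), n + 1 ≤ f ⟨n, h⟩ := by
    intro n
    induction n with
    | zero =>
      intro h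
      have := hTL (hfmem ⟨0, h⟩)
      simp only [Finset.mem_Icc] at this
      omega
    | succ n ih =>
      intro h
      have hn : n < K := Nat.lt_of_succ_lt h
      have h1 := ih hn
      have h2 : f ⟨n, hn⟩ < f ⟨n + 1, h⟩ := by
        apply (T.orderEmbOfFin hTcard).strictMono
        exact Fin.mk_lt_mk.mpr (Nat.lt_succ_self n)
      omega
  -- product comparison
  have hprodle : (∏ l ∈ Finset.Icc 1 K, M l) ≤ ∏ l ∈ T, M l := by
    have himg : Finset.image (fun i => f i) Finset.univ = T := by
      apply Finset.coe_injective
      rw [Finset.coe_image, Finset.coe_univ, Set.image_univ]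
      exact T.range_orderEmbOfFin hTcard
    rw [← himg, Finset.prod_image (fun a _ b _ hab => f.injective hab)]
    have hIcc : Finset.Icc 1 K = Finset.image (fun i => i + 1) (Finset.range K) := by
      ext x
      simp only [Finset.mem_Icc, Finset.mem_image, Finset.mem_range]
      constructor
      · rintro ⟨h1, h2⟩; exact ⟨x - 1, by omega, by omega⟩
      · rintro ⟨y, hy, rfl⟩; omega
    rw [hIcc, Finset.prod_image (fun a _ b _ hab => by omega)]
    rw [← Fin.prod_univ_eq_prod_range (fun i => M (i + 1)) K]
    apply Finset.prod_le_prod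
    · intro i _; exact Nat.zero_le _
    · intro i _
      apply hMmono
      · simp only [Finset.mem_Icc]
        have := i.2; omega
      · exact hTL (hfmem i)
      · have := hflb i.1 i.2
        simpa using this
  -- divisibility
  have hdvd : (∏ l ∈ T, (M l : ℤ)) ∣ (X' : ℤ) - X := by
    apply Finset.prod_dvd_of_coprime
    · intro l₁ h₁ l₂ h₂ hne
      have := hMcop l₁ (hTL h₁) l₂ (hTL h₂) hne
      exact (Nat.isCoprime_iff_coprime).mpr this
    · intro l hl
      have hagree := hSagree l (hTS hl)
      exact Nat.ModEq.dvd (hagree : X ≡ X' [MOD M l])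
  have hTprodZ : (∏ l ∈ T, (M l : ℤ)) = ((∏ l ∈ T, M l : ℕ) : ℤ) := by push_cast; ring
  rw [hTprodZ] at hdvd
  have habs : |(X' : ℤ) - X| < ((∏ l ∈ T, M l : ℕ) : ℤ) := by
    rw [abs_sub_lt_iff]
    constructor
    · have : (X' : ℤ) < ((∏ l ∈ Finset.Icc 1 K, M l : ℕ) : ℤ) := by exact_mod_cast hX'
      have h2 : ((∏ l ∈ Finset.Icc 1 K, M l : ℕ) : ℤ) ≤ ((∏ l ∈ T, M l : ℕ) : ℤ) := by
        exact_mod_cast hprodle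
      have h3 : (0 : ℤ) ≤ X := Int.ofNat_nonneg X
      omega
    · have : (X : ℤ) < ((∏ l ∈ Finset.Icc 1 K, M l : ℕ) : ℤ) := by exact_mod_cast hX
      have h2 : ((∏ l ∈ Finset.Icc 1 K, M l : ℕ) : ℤ) ≤ ((∏ l ∈ T, M l : ℕ) : ℤ) := by
        exact_mod_cast hprodle
      have h3 : (0 : ℤ) ≤ X' := Int.ofNat_nonneg X'
      omega
  have := Int.eq_zero_of_abs_lt_dvd hdvd habs
  omega
end

section
/- There exists an index j ∈ {1,…,κ−1} such that γ_{j+1} − γ_j > 2δ, or else γ_1 + Γ − γ_κ > 2δ. In other words, among the sorted common residues on the circle modulo Γ there are two cyclically consecutive residues whose clockwise gap exceeds 2δ. -/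
/-!
On the circle `ℝ / Γℤ`, every residue lies within `|Δ| < δ` of some centre `r^c_i`. If all cyclic
gaps between consecutive residues were at most `2δ`, every point of the circle would lie within
`δ` of a residue, so the `N` closed arcs of radius `δ + max |Δ| < 2δ` around the centres would
cover the circle; but their total length is less than `4Nδ = Γ`.
-/

/-- `rmod Γ x` is the representative of `x` modulo `Γ` in `[0, Γ)` (for `Γ > 0`). -/
noncomputable def rmod (Γ x : ℝ) : ℝ := x - Γ * (⌊x / Γ⌋ : ℝ)

open MeasureTheory Set Metric

theorem exists_abs_sub_le_of_sub_le {α : Type*} [Field α] [LinearOrder α] [IsStrictOrderedRing α]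
    {f : ℕ → α} {d x : α} (hd : 0 ≤ d) :
    ∀ {m : ℕ}, (∀ k < m, f (k + 1) - f k ≤ 2 * d) → f 0 ≤ x → x ≤ f m →
      ∃ k ≤ m, |x - f k| ≤ d
  | 0, _, h0, hm => ⟨0, le_rfl, by rw [abs_le]; constructor <;> linarith⟩
  | m + 1, hstep, h0, hm => by
    rcases le_or_gt x (f m) with hxm | hxm
    · obtain ⟨k, hk, hxk⟩ := exists_abs_sub_le_of_sub_le hd (fun k hk ↦ hstep k (by omega)) h0 hxm
      exact ⟨k, by omega, hxk⟩
    · have hlast := hstep m (by omega)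
      rcases le_or_gt (x - f m) d with hnear | hfar
      · exact ⟨m, by omega, by rw [abs_le]; constructor <;> linarith⟩
      · exact ⟨m + 1, le_rfl, by rw [abs_le]; constructor <;> linarith⟩

namespace AddCircle

theorem dist_coe_le_abs_sub (p x y : ℝ) : dist (x : AddCircle p) y ≤ |x - y| := by
  rw [dist_eq_norm, ← coe_sub]
  exact QuotientAddGroup.norm_mk_le_norm

theorem coe_rmod (p x : ℝ) : (rmod p x : AddCircle p) = x := by
  rw [rmod, coe_sub, mul_comm, ← zsmul_eq_mul, coe_zsmul, coe_period, smul_zero, sub_zero]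

theorem exists_dist_le_of_cyclic_gaps_le {p : ℝ} [Fact (0 < p)] {κ : ℕ} (hκ : 0 < κ)
    {γ : Fin κ → ℝ} {d : ℝ} (hd : 0 ≤ d)
    (hstep : ∀ j k : Fin κ, (k : ℕ) = j + 1 → γ k - γ j ≤ 2 * d)
    (hwrap : ∀ j k : Fin κ, (j : ℕ) = 0 → (k : ℕ) = κ - 1 → γ j + p - γ k ≤ 2 * d)
    (x : AddCircle p) : ∃ j, dist x (γ j : AddCircle p) ≤ d := by
  let j₀ : Fin κ := ⟨0, hκ⟩
  -- the walk `γ 0, …, γ (κ - 1), γ 0 + p` sweeps out one full period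
  let f : ℕ → ℝ := fun k ↦ if h : k < κ then γ ⟨k, h⟩ else γ j₀ + p
  have hf : ∀ k < κ, f (k + 1) - f k ≤ 2 * d := by
    intro k hk
    by_cases hk' : k + 1 < κ
    · simpa [f, hk, hk'] using hstep ⟨k, hk⟩ ⟨k + 1, hk'⟩ rfl
    · simpa [f, hk, hk'] using hwrap j₀ ⟨k, hk⟩ rfl (by simp; omega)
  obtain ⟨y, hy, rfl⟩ : x ∈ ((↑) : ℝ → AddCircle p) '' Ico (γ j₀) (γ j₀ + p) := by
    rw [coe_image_Ico_eq]; trivial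
  obtain ⟨k, hk, hyk⟩ := exists_abs_sub_le_of_sub_le hd hf (by simpa [f, hκ] using hy.1)
    (by simpa [f] using hy.2.le)
  by_cases hkκ : k < κ
  · refine ⟨⟨k, hkκ⟩, (dist_coe_le_abs_sub p _ _).trans ?_⟩
    simpa [f, hkκ] using hyk
  · refine ⟨j₀, ?_⟩
    rw [← coe_add_period p (γ j₀)]
    refine (dist_coe_le_abs_sub p _ _).trans ?_
    simpa [f, hkκ] using hyk

theorem exists_forall_lt_dist {p : ℝ} [hp : Fact (0 < p)] {ι : Type*} [Fintype ι]
    (c : ι → AddCircle p) {r : ℝ} (h : Fintype.card ι * (2 * r) < p) :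
    ∃ x, ∀ i, r < dist x (c i) := by
  by_contra! hcover
  have hunion : univ ⊆ ⋃ i, closedBall (c i) r := fun x _ ↦
    mem_iUnion.2 ((hcover x).imp fun _ ↦ mem_closedBall.2)
  have := calc
    ENNReal.ofReal p = volume (univ : Set (AddCircle p)) := (AddCircle.measure_univ p).symm
    _ ≤ volume (⋃ i, closedBall (c i) r) := measure_mono hunion
    _ ≤ ∑ i, volume (closedBall (c i) r) := measure_iUnion_fintype_le _ _
    _ = ∑ _i : ι, ENNReal.ofReal (min p (2 * r)) := by simp only [volume_closedBall]
    _ ≤ ∑ _i : ι, ENNReal.ofReal (2 * r) :=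
      Finset.sum_le_sum fun _ _ ↦ ENNReal.ofReal_le_ofReal (min_le_right _ _)
    _ = ENNReal.ofReal (Fintype.card ι * (2 * r)) := by
      rw [Finset.sum_const, Finset.card_univ, ← ENNReal.ofReal_nsmul, nsmul_eq_mul]
    _ < ENNReal.ofReal p := (ENNReal.ofReal_lt_ofReal_iff hp.out).2 h
  exact this.false

end AddCircle

theorem exists_gap_exceeding_two_delta_general
    (N L : ℕ) (hN : 1 ≤ N) (hL : 1 ≤ L)
    (δ : ℝ) (hδ : 0 < δ) (Γ : ℝ) (hΓ : Γ = 4 * N * δ)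
    (rc : Fin N → ℝ)
    (Δ : Fin N → Fin L → ℝ) (hΔ : ∀ i l, |Δ i l| < δ)
    (tilde : Fin N → Fin L → ℝ)
    (htilde : ∀ i l, tilde i l = rmod Γ (rc i + Δ i l))
    (γ : Fin (N * L) → ℝ)
    (hγrange : ∀ j, ∃ i l, γ j = tilde i l) :
    (∃ j k : Fin (N * L), (k : ℕ) = (j : ℕ) + 1 ∧ γ k - γ j > 2 * δ) ∨
    (∃ j k : Fin (N * L), (j : ℕ) = 0 ∧ (k : ℕ) = N * L - 1 ∧
      γ j + Γ - γ k > 2 * δ) := by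
  have hN' : (1 : ℝ) ≤ N := by exact_mod_cast hN
  have : Fact (0 < Γ) := ⟨by rw [hΓ]; positivity⟩
  have : Nonempty (Fin N × Fin L) := ⟨(⟨0, hN⟩, ⟨0, hL⟩)⟩
  obtain ⟨q, hq⟩ := Finite.exists_max fun q : Fin N × Fin L ↦ |Δ q.1 q.2|
  have hnear : ∀ j, ∃ i, dist (γ j : AddCircle Γ) (rc i) ≤ |Δ q.1 q.2| := by
    intro j
    obtain ⟨i, l, hj⟩ := hγrange j
    refine ⟨i, ?_⟩
    rw [hj, htilde, AddCircle.coe_rmod]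
    calc _ ≤ |rc i + Δ i l - rc i| := AddCircle.dist_coe_le_abs_sub _ _ _
      _ = |Δ i l| := by rw [add_sub_cancel_left]
      _ ≤ _ := hq (i, l)
  obtain ⟨x, hx⟩ := AddCircle.exists_forall_lt_dist (fun i : Fin N ↦ (rc i : AddCircle Γ))
    (r := δ + |Δ q.1 q.2|) (by rw [Fintype.card_fin, hΓ]; nlinarith [hΔ q.1 q.2])
  by_contra! hgaps
  obtain ⟨j, hxj⟩ :=
    AddCircle.exists_dist_le_of_cyclic_gaps_le (Nat.mul_pos hN hL) hδ.le hgaps.1 hgaps.2 x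
  obtain ⟨i, hji⟩ := hnear j
  exact (hx i).not_ge ((dist_triangle _ _ _).trans (add_le_add hxj hji))

/-- Among the sorted common residues `γ_1 < ⋯ < γ_κ` on the circle modulo
`Γ = 4Nδ`, there exist two cyclically consecutive residues whose clockwise
gap exceeds `2δ`. -/
theorem exists_gap_exceeding_two_delta
    (N L : ℕ) (hN : 1 ≤ N) (hL : 1 ≤ L)
    (δ : ℝ) (hδ : 0 < δ) (Γ : ℝ) (hΓ : Γ = 4 * N * δ)
    (rc : Fin N → ℝ) (hrc : ∀ i, 0 ≤ rc i ∧ rc i < Γ)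
    (Δ : Fin N → Fin L → ℝ) (hΔ : ∀ i l, |Δ i l| < δ)
    (tilde : Fin N → Fin L → ℝ)
    (htilde : ∀ i l, tilde i l = rmod Γ (rc i + Δ i l))
    (hinj : Function.Injective (fun p : Fin N × Fin L => tilde p.1 p.2))
    (γ : Fin (N * L) → ℝ) (hγmono : StrictMono γ)
    (hγrange : ∀ j, ∃ i l, γ j = tilde i l) :
    (∃ j k : Fin (N * L), (k : ℕ) = (j : ℕ) + 1 ∧ γ k - γ j > 2 * δ) ∨
    (∃ j k : Fin (N * L), (j : ℕ) = 0 ∧ (k : ℕ) = N * L - 1 ∧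
      γ j + Γ - γ k > 2 * δ) :=
  exists_gap_exceeding_two_delta_general N L hN hL δ hδ Γ hΓ rc Δ hΔ tilde htilde γ hγrange
end

section
/- Suppose j_0 ∈ {1,…,κ} satisfies either (j_0 < κ and γ_{j_0+1} − γ_{j_0} > 2δ) or (j_0 = κ and γ_1 + Γ − γ_κ > 2δ). Then γ_{j_0} = r̃^c_{i_0 l_0} for some i_0 ∈ {1,…,N} and l_0 ∈ {1,…,L} such that Δ_{i_0 l_0} = max_{1 ≤ l ≤ L} Δ_{i_0 l}, and the cyclically next residue γ_{j_1} (where j_1 = j_0 + 1 if j_0 < κ and j_1 = 1 if j_0 = κ) satisfies γ_{j_1} = r̃^c_{i_1 l_1} for some i_1 ∈ {1,…,N} and l_1 ∈ {1,…,L} such that Δ_{i_1 l_1} = min_{1 ≤ l ≤ L} Δ_{i_1 l}. -/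
lemma rmod_nonneg_lt {Γ x : ℝ} (hΓ : 0 < Γ) : 0 ≤ rmod Γ x ∧ rmod Γ x < Γ := by
  have h : rmod Γ x = Γ * Int.fract (x / Γ) := by
    unfold rmod Int.fract
    field_simp
  constructor
  · rw [h]; exact mul_nonneg hΓ.le (Int.fract_nonneg _)
  · rw [h]
    calc Γ * Int.fract (x / Γ) < Γ * 1 := by
          exact mul_lt_mul_of_pos_left (Int.fract_lt_one _) hΓ
      _ = Γ := mul_one Γ

lemma rmod_eq_self {Γ x : ℝ} (hΓ : 0 < Γ) (h0 : 0 ≤ x) (h1 : x < Γ) : rmod Γ x = x := by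
  have hf : ⌊x / Γ⌋ = 0 := by
    rw [Int.floor_eq_zero_iff]
    constructor
    · exact div_nonneg h0 hΓ.le
    · exact (div_lt_one hΓ).mpr h1
  unfold rmod
  rw [hf]
  simp

lemma rmod_sub_int {Γ : ℝ} (hΓ : 0 < Γ) (x : ℝ) (m : ℤ) :
    rmod Γ (x - Γ * (m : ℝ)) = rmod Γ x := by
  unfold rmod
  have h : (x - Γ * (m : ℝ)) / Γ = x / Γ - (m : ℝ) := by
    field_simp
  rw [h]
  rw [show x / Γ - (m : ℝ) = x / Γ + (-m : ℤ) by push_cast; ring, Int.floor_add_intCast]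
  push_cast
  ring

/-- The common residue immediately before a gap of width `> 2δ` carries the
maximal error of its number, and the common residue immediately after the gap
carries the minimal error of its number. -/
theorem gap_endpoints_extremal_errors
    (N L : ℕ) (hN : 1 ≤ N) (hL : 1 ≤ L)
    (δ : ℝ) (hδ : 0 < δ) (Γ : ℝ) (hΓ : Γ = 4 * N * δ)
    (rc : Fin N → ℝ) (hrc : ∀ i, 0 ≤ rc i ∧ rc i < Γ)
    (Δ : Fin N → Fin L → ℝ) (hΔ : ∀ i l, |Δ i l| < δ)
    (tilde : Fin N → Fin L → ℝ)
    (htilde : ∀ i l, tilde i l = rmod Γ (rc i + Δ i l))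
    (hinj : Function.Injective (fun p : Fin N × Fin L => tilde p.1 p.2))
    (γ : Fin (N * L) → ℝ) (hγmono : StrictMono γ)
    (hγrange : ∀ j, ∃ i l, γ j = tilde i l)
    (j₀ : Fin (N * L))
    (hj₀ : ((j₀ : ℕ) + 1 < N * L ∧
              ∀ k : Fin (N * L), (k : ℕ) = (j₀ : ℕ) + 1 → γ k - γ j₀ > 2 * δ) ∨
           ((j₀ : ℕ) = N * L - 1 ∧
              ∀ j k : Fin (N * L), (j : ℕ) = 0 → (k : ℕ) = N * L - 1 →
                γ j + Γ - γ k > 2 * δ))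
    (j₁ : Fin (N * L))
    (hj₁ : (j₁ : ℕ) = if (j₀ : ℕ) + 1 < N * L then (j₀ : ℕ) + 1 else 0) :
    (∃ i₀ l₀, γ j₀ = tilde i₀ l₀ ∧ ∀ l, Δ i₀ l ≤ Δ i₀ l₀) ∧
    (∃ i₁ l₁, γ j₁ = tilde i₁ l₁ ∧ ∀ l, Δ i₁ l₁ ≤ Δ i₁ l) := by
  have hN1 : (1 : ℝ) ≤ (N : ℝ) := by exact_mod_cast hN
  have hΓ4 : 4 * δ ≤ Γ := by rw [hΓ]; nlinarith
  have hΓpos : 0 < Γ := by linarith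
  -- every tilde value is attained by some γ
  have hNL : 0 < N * L := Nat.mul_pos hN hL
  choose f g hfg using hγrange
  have hFinj : Function.Injective (fun j => ((f j, g j) : Fin N × Fin L)) := by
    intro a b hab
    apply hγmono.injective
    rw [hfg a, hfg b]
    simp only [Prod.mk.injEq] at hab
    rw [hab.1, hab.2]
  have hFbij : Function.Bijective (fun j => ((f j, g j) : Fin N × Fin L)) :=
    (Fintype.bijective_iff_injective_and_card _).mpr ⟨hFinj, by simp⟩
  have hsur : ∀ i l, ∃ k, γ k = tilde i l := by
    intro i l
    obtain ⟨j, hj⟩ := hFbij.2 (i, l)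
    simp only [Prod.mk.injEq] at hj
    exact ⟨j, by rw [hfg j, hj.1, hj.2]⟩
  have hb : ∀ j, 0 ≤ γ j ∧ γ j < Γ := by
    intro j
    rw [hfg j, htilde]
    exact rmod_nonneg_lt hΓpos
  have hshift : ∀ (i : Fin N) (l l' : Fin L),
      tilde i l = rmod Γ (tilde i l' + (Δ i l - Δ i l')) := by
    intro i l l'
    rw [htilde i l, htilde i l']
    have h1 : rmod Γ (rc i + Δ i l') + (Δ i l - Δ i l')
        = (rc i + Δ i l) - Γ * ((⌊(rc i + Δ i l') / Γ⌋ : ℤ) : ℝ) := by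
      unfold rmod; ring
    rw [h1, rmod_sub_int hΓpos]
  constructor
  · -- maximal error at γ j₀
    have h0 := hfg j₀; set i₀ := f j₀; set l₀ := g j₀
    refine ⟨i₀, l₀, h0, fun l => ?_⟩
    by_contra hcon
    push_neg at hcon
    set d := Δ i₀ l - Δ i₀ l₀ with hd
    have hd0 : 0 < d := sub_pos.mpr hcon
    have hd2 : d < 2 * δ := by
      have h1 := (abs_lt.mp (hΔ i₀ l)).2
      have h2 := (abs_lt.mp (hΔ i₀ l₀)).1
      simp only [hd]; linarith
    have ht : tilde i₀ l = rmod Γ (γ j₀ + d) := by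
      rw [h0]; exact hshift i₀ l l₀
    obtain ⟨k, hk⟩ := hsur i₀ l
    have hkval : γ k = rmod Γ (γ j₀ + d) := by rw [hk, ht]
    rcases hj₀ with ⟨hlt, hgap⟩ | ⟨hlast, hgap⟩
    · -- interior gap
      have hj₁v : (j₁ : ℕ) = (j₀ : ℕ) + 1 := by rw [hj₁, if_pos hlt]
      have hgap1 : γ j₁ - γ j₀ > 2 * δ := hgap j₁ hj₁v
      by_cases hw : γ j₀ + d < Γ
      · have hkk : γ k = γ j₀ + d := by
          rw [hkval, rmod_eq_self hΓpos (by linarith [(hb j₀).1]) hw]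
        have hk1 : j₀ < k := hγmono.lt_iff_lt.mp (by rw [hkk]; linarith)
        have hk2 : j₁ ≤ k := by
          rw [Fin.le_def]
          rw [Fin.lt_def] at hk1
          omega
        have := hγmono.monotone hk2
        rw [hkk] at this
        linarith
      · push_neg at hw
        have : γ j₀ + d < Γ := by linarith [(hb j₁).2]
        linarith
    · -- wrap-around gap: j₀ is the last index
      have hmax : ∀ m, γ m ≤ γ j₀ := by
        intro m
        apply hγmono.monotone
        rw [Fin.le_def]
        omega
      by_cases hw : γ j₀ + d < Γ
      · have hkk : γ k = γ j₀ + d := by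
          rw [hkval, rmod_eq_self hΓpos (by linarith [(hb j₀).1]) hw]
        have := hmax k
        rw [hkk] at this
        linarith
      · push_neg at hw
        have hkk : γ k = γ j₀ + d - Γ := by
          have hper := rmod_sub_int hΓpos (γ j₀ + d - Γ) (-1)
          rw [show (γ j₀ + d - Γ) - Γ * ((-1 : ℤ) : ℝ) = γ j₀ + d by push_cast; ring] at hper
          rw [hkval, hper]
          exact rmod_eq_self hΓpos (by linarith) (by linarith [(hb j₀).2])
        have hgap2 : γ ⟨0, hNL⟩ + Γ - γ j₀ > 2 * δ := hgap ⟨0, hNL⟩ j₀ rfl hlast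
        have hmin : γ ⟨0, hNL⟩ ≤ γ k := by
          apply hγmono.monotone
          simp [Fin.le_def]
        rw [hkk] at hmin
        linarith
  · -- minimal error at γ j₁
    have h1 := hfg j₁; set i₁ := f j₁; set l₁ := g j₁
    refine ⟨i₁, l₁, h1, fun l => ?_⟩
    by_contra hcon
    push_neg at hcon
    set d := Δ i₁ l₁ - Δ i₁ l with hd
    have hd0 : 0 < d := sub_pos.mpr hcon
    have hd2 : d < 2 * δ := by
      have ha := (abs_lt.mp (hΔ i₁ l)).1
      have hb' := (abs_lt.mp (hΔ i₁ l₁)).2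
      simp only [hd]; linarith
    have ht : tilde i₁ l = rmod Γ (γ j₁ - d) := by
      rw [show γ j₁ - d = γ j₁ + (Δ i₁ l - Δ i₁ l₁) by simp only [hd]; ring, h1]
      exact hshift i₁ l l₁
    obtain ⟨k, hk⟩ := hsur i₁ l
    have hkval : γ k = rmod Γ (γ j₁ - d) := by rw [hk, ht]
    rcases hj₀ with ⟨hlt, hgap⟩ | ⟨hlast, hgap⟩
    · have hj₁v : (j₁ : ℕ) = (j₀ : ℕ) + 1 := by rw [hj₁, if_pos hlt]
      have hgap1 : γ j₁ - γ j₀ > 2 * δ := hgap j₁ hj₁v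
      by_cases hw : 0 ≤ γ j₁ - d
      · have hkk : γ k = γ j₁ - d := by
          rw [hkval, rmod_eq_self hΓpos hw (by linarith [(hb j₁).2])]
        have hk1 : k < j₁ := hγmono.lt_iff_lt.mp (by rw [hkk]; linarith)
        have hk2 : k ≤ j₀ := by
          rw [Fin.le_def]; rw [Fin.lt_def, hj₁v] at hk1; omega
        have := hγmono.monotone hk2
        rw [hkk] at this
        linarith
      · push_neg at hw
        have := (hb j₀).1
        linarith
    · have hnot : ¬ ((j₀ : ℕ) + 1 < N * L) := by omega
      have hj₁v : (j₁ : ℕ) = 0 := by rw [hj₁, if_neg hnot]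
      have hgap1 : γ j₁ + Γ - γ j₀ > 2 * δ := hgap j₁ j₀ hj₁v hlast
      by_cases hw : 0 ≤ γ j₁ - d
      · have hkk : γ k = γ j₁ - d := by
          rw [hkval, rmod_eq_self hΓpos hw (by linarith [(hb j₁).2])]
        have hmin : γ j₁ ≤ γ k := by
          apply hγmono.monotone
          rw [Fin.le_def, hj₁v]
          omega
        rw [hkk] at hmin
        linarith
      · push_neg at hw
        have hkk : γ k = γ j₁ - d + Γ := by
          have hper := rmod_sub_int hΓpos (γ j₁ - d + Γ) 1
          rw [show (γ j₁ - d + Γ) - Γ * ((1 : ℤ) : ℝ) = γ j₁ - d by push_cast; ring] at hper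
          rw [hkval, hper]
          exact rmod_eq_self hΓpos (by linarith [(hb j₁).1]) (by linarith)
        have hmax : γ k ≤ γ j₀ := by
          apply hγmono.monotone
          rw [Fin.le_def]
          omega
        rw [hkk] at hmax
        linarith
end

section
/- Let t ∈ 𝒩 and set 𝒢' := 𝒢 \ ℛ_t. Define r̂^c_{il} as follows: if there exists a pair (i', l') with l' ∉ ℛ_t and r̃^c_{i'l'} > γ_t, then r̂^c_{il} := r̃^c_{il} − Γ whenever r̃^c_{il} > γ_t and r̂^c_{il} := r̃^c_{il} otherwise; if no such pair exists, then r̂^c_{il} := r̃^c_{il} for all i, l. Then for each i ∈ {1,…,N} there exists an integer t_i such that r̂^c_{il} = r^c_i + Δ_{il} + t_i Γ for every l ∈ 𝒢'; in particular, for each i, the ascending order of (r̂^c_{il})_{l ∈ 𝒢'} coincides with the ascending order of (r^c_i + Δ_{il})_{l ∈ 𝒢'}. -/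
lemma rmod_eq_of (Γ x : ℝ) (h : 0 < Γ) (k : ℤ) (h1 : 0 ≤ x - k * Γ)
    (h2 : x - k * Γ < Γ) : rmod Γ x = x - k * Γ := by
  have hf : ⌊x / Γ⌋ = k := by
    rw [Int.floor_eq_iff]
    constructor
    · rw [le_div_iff₀ h]; linarith
    · rw [div_lt_iff₀ h]; push_cast; linarith
  unfold rmod
  rw [hf]
  ring

lemma rmod_nonneg (Γ x : ℝ) (h : 0 < Γ) : 0 ≤ rmod Γ x := by
  have := Int.floor_le (x / Γ)
  unfold rmod
  have := (le_div_iff₀ h).mp this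
  nlinarith [this]

lemma rmod_lt (Γ x : ℝ) (h : 0 < Γ) : rmod Γ x < Γ := by
  have := Int.lt_floor_add_one (x / Γ)
  unfold rmod
  have := (div_lt_iff₀ h).mp this
  nlinarith [this]

lemma rmod_int_sub (Γ x : ℝ) : ∃ k : ℤ, rmod Γ x = x + k * Γ :=
  ⟨-⌊x / Γ⌋, by unfold rmod; push_cast; ring⟩

/-- After removing the residue sets whose labels appear in the cyclic interval
`I_t` for some `t ∈ 𝒩`, cutting the circle at `γ_t` recovers, for each `i` and
the remaining good labels `𝒢' = 𝒢 \ ℛ_t`, the values `r^c_i + Δ_{il}` up to a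
common multiple of `Γ`; in particular the ascending order of `(r̂^c_{il})_{l∈𝒢'}`
coincides with that of `(r^c_i + Δ_{il})_{l∈𝒢'}`. -/
theorem cut_at_cleaned_interval_recovers_relative_positions
    (N L K : ℕ) (hN : 1 ≤ N) (hK : 1 ≤ K) (hKL : K ≤ L)
    (δ : ℝ) (hδ : 0 < δ) (Γ : ℝ) (hΓ : Γ = 4 * N * δ)
    (G B : Finset (Fin L)) (hGB : G ∪ B = Finset.univ) (hGBdisj : Disjoint G B)
    (hB : B.card ≤ (L - K) / 2)
    (rc : Fin N → ℝ) (hrc : ∀ i, 0 ≤ rc i ∧ rc i < Γ)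
    (Δ : Fin N → Fin L → ℝ) (hΔ : ∀ i, ∀ l ∈ G, |Δ i l| < δ)
    (tilde : Fin N → Fin L → ℝ)
    (htilde : ∀ i l, tilde i l = rmod Γ (rc i + Δ i l))
    (hinj : Function.Injective (fun p : Fin N × Fin L => tilde p.1 p.2))
    (γ : Fin (N * L) → ℝ) (hγmono : StrictMono γ)
    (hγrange : ∀ j, ∃ i l, γ j = tilde i l)
    (lbl : Fin (N * L) → Fin L) (hlbl : ∀ j, ∃ i, γ j = tilde i (lbl j))
    (R : Fin (N * L) → Finset (Fin L))
    (hR : ∀ j l, l ∈ R j ↔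
      ∃ i, 0 < rmod Γ (tilde i l - γ j) ∧ rmod Γ (tilde i l - γ j) ≤ 2 * δ)
    (t : Fin (N * L))
    (ht : (R t).card ≤ (L - K) / 2 ∧ lbl t ∉ R t)
    (hat : Fin N → Fin L → ℝ)
    (hhat₁ : ∀ i l, (∃ i' l', l' ∉ R t ∧ tilde i' l' > γ t) → tilde i l > γ t →
      hat i l = tilde i l - Γ)
    (hhat₂ : ∀ i l, (∃ i' l', l' ∉ R t ∧ tilde i' l' > γ t) → ¬(tilde i l > γ t) →
      hat i l = tilde i l)
    (hhat₃ : ¬(∃ i' l', l' ∉ R t ∧ tilde i' l' > γ t) →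
      ∀ i l, hat i l = tilde i l) :
    (∀ i, ∃ tᵢ : ℤ, ∀ l ∈ G \ R t, hat i l = rc i + Δ i l + tᵢ * Γ) ∧
    (∀ i, ∀ l ∈ G \ R t, ∀ l' ∈ G \ R t,
      (hat i l ≤ hat i l' ↔ rc i + Δ i l ≤ rc i + Δ i l')) := by
  have hN' : (1 : ℝ) ≤ N := by exact_mod_cast hN
  have hΓpos : 0 < Γ := by rw [hΓ]; nlinarith
  have hδΓ : 4 * δ ≤ Γ := by rw [hΓ]; nlinarith
  have htb : ∀ i l, 0 ≤ tilde i l ∧ tilde i l < Γ := by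
    intro i l
    rw [htilde]
    exact ⟨rmod_nonneg _ _ hΓpos, rmod_lt _ _ hΓpos⟩
  have hγt : 0 ≤ γ t ∧ γ t < Γ := by
    obtain ⟨i, l, h⟩ := hγrange t
    rw [h]; exact htb i l
  have hmult : ∀ i l, ∃ k : ℤ, hat i l = rc i + Δ i l + k * Γ := by
    intro i l
    obtain ⟨k, hk⟩ := rmod_int_sub Γ (rc i + Δ i l)
    by_cases hE : ∃ i' l', l' ∉ R t ∧ tilde i' l' > γ t
    · by_cases hg : tilde i l > γ t
      · exact ⟨k - 1, by rw [hhat₁ i l hE hg, htilde, hk]; push_cast; ring⟩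
      · exact ⟨k, by rw [hhat₂ i l hE hg, htilde, hk]⟩
    · exact ⟨k, by rw [hhat₃ hE i l, htilde, hk]⟩
  -- key one-sided bound
  have keyA : ∀ (i : Fin N) (l l' : Fin L), l ∉ R t → l' ∉ R t →
      hat i l - hat i l' ≤ Γ - 2 * δ := by
    intro i l l' hl hl'
    by_contra hcon
    push_neg at hcon
    have hRl' : ¬ (0 < rmod Γ (tilde i l' - γ t) ∧ rmod Γ (tilde i l' - γ t) ≤ 2 * δ) := by
      intro h
      exact hl' ((hR t l').2 ⟨i, h⟩)
    by_cases hE : ∃ i' l'', l'' ∉ R t ∧ tilde i' l'' > γ t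
    · have h1 : hat i l ≤ γ t := by
        by_cases hg : tilde i l > γ t
        · rw [hhat₁ i l hE hg]
          have := (htb i l).2
          linarith [hγt.1]
        · rw [hhat₂ i l hE hg]
          exact not_lt.mp hg
      have h2 : hat i l' < γ t - Γ + 2 * δ := by linarith
      by_cases hg' : tilde i l' > γ t
      · rw [hhat₁ i l' hE hg'] at h2
        have hr : rmod Γ (tilde i l' - γ t) = tilde i l' - γ t := by
          have := rmod_eq_of Γ (tilde i l' - γ t) hΓpos 0 (by push_cast; linarith) (by push_cast; linarith)
          simpa using this
        exact hRl' ⟨by rw [hr]; linarith, by rw [hr]; linarith⟩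
      · rw [hhat₂ i l' hE hg'] at h2
        have hle := not_lt.mp hg'
        have hr : rmod Γ (tilde i l' - γ t) = tilde i l' - γ t + Γ := by
          have := rmod_eq_of Γ (tilde i l' - γ t) hΓpos (-1)
            (by push_cast; linarith [(htb i l').1, hγt.2])
            (by push_cast; linarith)
          push_cast at this
          linarith [this]
        exact hRl' ⟨by rw [hr]; linarith [(htb i l').1, hγt.2], by rw [hr]; linarith⟩
    · have hE' := hE
      push_neg at hE'
      have ha : tilde i l ≤ γ t := hE' i l hl
      have ha' : tilde i l' ≤ γ t := hE' i l' hl'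
      rw [hhat₃ hE i l, hhat₃ hE i l'] at hcon
      rcases eq_or_lt_of_le ha' with heq | hlt
      · linarith
      · have hr : rmod Γ (tilde i l' - γ t) = tilde i l' - γ t + Γ := by
          have := rmod_eq_of Γ (tilde i l' - γ t) hΓpos (-1)
            (by push_cast; linarith [(htb i l').1, hγt.2])
            (by push_cast; linarith)
          push_cast at this
          linarith [this]
        have hpos : 0 < tilde i l' - γ t + Γ := by linarith [(htb i l').1, hγt.2]
        have h2δ : 2 * δ < tilde i l' - γ t + Γ := by
          by_contra h
          push_neg at h
          exact hRl' ⟨by rw [hr]; exact hpos, by rw [hr]; linarith⟩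
        linarith
  have keydiff : ∀ i, ∀ l ∈ G \ R t, ∀ l' ∈ G \ R t,
      hat i l - hat i l' = Δ i l - Δ i l' := by
    intro i l hl l' hl'
    rw [Finset.mem_sdiff] at hl hl'
    obtain ⟨k, hk⟩ := hmult i l
    obtain ⟨k', hk'⟩ := hmult i l'
    have hA := keyA i l l' hl.2 hl'.2
    have hA' := keyA i l' l hl'.2 hl.2
    have hd1 := abs_lt.mp (hΔ i l hl.1)
    have hd2 := abs_lt.mp (hΔ i l' hl'.1)
    have hm : k = k' := by
      by_contra hne
      have h1 : (1 : ℝ) ≤ |(k : ℝ) - (k' : ℝ)| := by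
        have hz : k - k' ≠ 0 := sub_ne_zero.mpr hne
        have := Int.one_le_abs hz
        calc (1 : ℝ) ≤ ((|k - k'| : ℤ) : ℝ) := by exact_mod_cast this
          _ = |(k : ℝ) - (k' : ℝ)| := by push_cast; ring
      have he : ((k : ℝ) - k') * Γ = (hat i l - hat i l') - (Δ i l - Δ i l') := by
        rw [hk, hk']; ring
      have habs : |((k : ℝ) - k') * Γ| < Γ := by
        rw [abs_lt]
        constructor <;> (rw [he]; nlinarith)
      rw [abs_mul, abs_of_pos hΓpos] at habs
      nlinarith
    rw [hk, hk', hm]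
    ring
  constructor
  · intro i
    by_cases hne : (G \ R t).Nonempty
    · obtain ⟨l0, hl0⟩ := hne
      obtain ⟨k, hk⟩ := hmult i l0
      refine ⟨k, fun l hl => ?_⟩
      have := keydiff i l hl l0 hl0
      rw [hk] at this
      linarith
    · exact ⟨0, fun l hl => absurd ⟨l, hl⟩ hne⟩
  · intro i l hl l' hl'
    have := keydiff i l hl l' hl'
    constructor <;> intro <;> linarith
end

section
/- The set 𝒩 has cardinality at most (L − K + 1)N. -/
/-!
Write `F = ⌊(L − K)/2⌋`. Every `γ_j` is a residue `r̃_{il}`. Two good residues of the same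
cluster `i` differ modulo `Γ` by `Δ_{il'} − Δ_{il} ∈ (−2δ, 2δ)`, and `2δ ≤ Γ`; so the window `I_j`
of `γ_j = r̃_{il}` contains `r̃_{il'}` for every good `l'` with `Δ_{il'} > Δ_{il}`. Hence
`|ℛ_j| ≤ F` forces `l` to be bad or one of the `F + 1` good labels of cluster `i` with the largest
errors, and each cluster contributes at most `|ℬ| + F + 1 ≤ 2F + 1 ≤ L − K + 1` indices to `𝒩`.
-/

open Finset

theorem rmod_add_mul_intCast (Γ x : ℝ) (k : ℤ) : rmod Γ (x + Γ * k) = rmod Γ x := by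
  rcases eq_or_ne Γ 0 with rfl | hΓ
  · simp
  · have h : (x + Γ * k) / Γ = x / Γ + k := by field_simp
    rw [rmod, rmod, h, Int.floor_add_intCast]
    push_cast
    ring

theorem rmod_eq_self_s10 {Γ x : ℝ} (hx₀ : 0 ≤ x) (hxΓ : x < Γ) : rmod Γ x = x := by
  have hfloor : ⌊x / Γ⌋ = 0 := Int.floor_eq_zero_iff.mpr
    ⟨div_nonneg hx₀ (hx₀.trans hxΓ.le), (div_lt_one (hx₀.trans_lt hxΓ)).mpr hxΓ⟩
  simp [rmod, hfloor]

theorem rmod_sub_rmod (Γ y z : ℝ) : rmod Γ (rmod Γ y - rmod Γ z) = rmod Γ (y - z) := by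
  have h : rmod Γ y - rmod Γ z = y - z + Γ * ((⌊z / Γ⌋ - ⌊y / Γ⌋ : ℤ) : ℝ) := by
    simp only [rmod]
    push_cast
    ring
  rw [h, rmod_add_mul_intCast]

theorem rmod_sub_rmod_mem_Ioc {Γ δ c a b : ℝ} (hδΓ : 2 * δ ≤ Γ) (ha : |a| < δ) (hb : |b| < δ)
    (hab : a < b) : rmod Γ (rmod Γ (c + b) - rmod Γ (c + a)) ∈ Set.Ioc 0 (2 * δ) := by
  rw [abs_lt] at ha hb
  rw [rmod_sub_rmod, add_sub_add_left_eq_sub, rmod_eq_self_s10 (by linarith) (by linarith)]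
  constructor <;> linarith

theorem card_filter_card_lt_le {α β : Type*} [LinearOrder β] {s : Finset α} {v : α → β}
    (hv : Set.InjOn v s) (F : ℕ) : #{a ∈ s | #{b ∈ s | v a < v b} ≤ F} ≤ F + 1 := by
  set above : α → ℕ := fun a ↦ #{b ∈ s | v a < v b}
  have hanti : ∀ a ∈ s, ∀ a' ∈ s, v a < v a' → above a' < above a := by
    intro a _ a' ha' h
    refine card_lt_card ⟨fun b hb ↦ ?_, fun hsub ↦ ?_⟩
    · simp only [mem_filter] at hb ⊢
      exact ⟨hb.1, h.trans hb.2⟩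
    · exact lt_irrefl _ (mem_filter.mp (hsub (mem_filter.mpr ⟨ha', h⟩))).2
  have hinj : Set.InjOn above s := by
    intro a ha a' ha' h
    by_contra hne
    rcases lt_or_gt_of_ne (hv.ne ha ha' hne) with hlt | hlt
    · exact (hanti a ha a' ha' hlt).ne h.symm
    · exact (hanti a' ha' a ha hlt).ne h
  have hmaps : ∀ a ∈ {a ∈ s | above a ≤ F}, above a ∈ range (F + 1) := fun a ha ↦
    mem_range.mpr (Nat.lt_succ_of_le (mem_filter.mp ha).2)
  simpa using card_le_card_of_injOn above hmaps (hinj.mono fun a ha ↦ (mem_filter.mp ha).1)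

open Classical in
theorem card_N_le_general
    (N L K : ℕ) (hN : 1 ≤ N)
    (δ : ℝ) (hδ : 0 < δ) (Γ : ℝ) (hΓ : Γ = 4 * N * δ)
    (G B : Finset (Fin L)) (hGB : G ∪ B = Finset.univ)
    (hB : B.card ≤ (L - K) / 2)
    (rc : Fin N → ℝ)
    (Δ : Fin N → Fin L → ℝ) (hΔ : ∀ i, ∀ l ∈ G, |Δ i l| < δ)
    (hΔdist : ∀ i, ∀ l ∈ G, ∀ l' ∈ G, Δ i l = Δ i l' → l = l')
    (tilde : Fin N → Fin L → ℝ)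
    (htilde : ∀ i l, tilde i l = rmod Γ (rc i + Δ i l))
    (γ : Fin (N * L) → ℝ) (hγmono : StrictMono γ)
    (hγrange : ∀ j, ∃ i l, γ j = tilde i l)
    (lbl : Fin (N * L) → Fin L)
    (R : Fin (N * L) → Finset (Fin L))
    (hR : ∀ j l, l ∈ R j ↔
      ∃ i, 0 < rmod Γ (tilde i l - γ j) ∧ rmod Γ (tilde i l - γ j) ≤ 2 * δ) :
    (Finset.univ.filter
        (fun j : Fin (N * L) =>
          (R j).card ≤ (L - K) / 2 ∧ lbl j ∉ R j)).card ≤ (L - K + 1) * N := by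
  set F := (L - K) / 2
  have hδΓ : 2 * δ ≤ Γ := by
    have : (1 : ℝ) ≤ N := by exact_mod_cast hN
    rw [hΓ]
    nlinarith
  choose cl lb hγ using hγrange
  have hahead : ∀ j, lb j ∈ G → #{l ∈ G | Δ (cl j) (lb j) < Δ (cl j) l} ≤ #(R j) := by
    refine fun j hj ↦ card_le_card fun l hl ↦ (hR j l).mpr ⟨cl j, ?_⟩
    obtain ⟨hlG, hlt⟩ := mem_filter.mp hl
    rw [hγ, htilde, htilde]
    exact rmod_sub_rmod_mem_Ioc hδΓ (hΔ _ _ hj) (hΔ _ _ hlG) hlt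
  refine (card_le_mul_card_image_of_maps_to (f := cl) (t := univ) (fun _ _ ↦ mem_univ _)
    (2 * F + 1) fun i _ ↦ ?_).trans (by rw [card_univ, Fintype.card_fin]; gcongr; omega)
  calc #{j ∈ _ | cl j = i}
      ≤ #({l ∈ G | #{l' ∈ G | Δ i l < Δ i l'} ≤ F} ∪ B) := by
        refine card_le_card_of_injOn lb (fun j hj ↦ ?_) fun j hj j' hj' h ↦ ?_
        · simp only [coe_filter, mem_filter, mem_univ, true_and, Set.mem_ofPred_eq] at hj
          obtain ⟨⟨hRj, -⟩, rfl⟩ := hj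
          rcases mem_union.mp (hGB ▸ mem_univ (lb j)) with hG | hB
          · exact mem_union_left _ (mem_filter.mpr ⟨hG, (hahead j hG).trans hRj⟩)
          · exact mem_union_right _ hB
        · simp only [coe_filter, mem_filter, mem_univ, true_and, Set.mem_ofPred_eq] at hj hj'
          exact hγmono.injective (by rw [hγ, hγ, hj.2, hj'.2, h])
    _ ≤ F + 1 + F := (card_union_le _ _).trans
        (add_le_add (card_filter_card_lt_le (fun l hl l' hl' ↦ hΔdist i l hl l' hl') F) hB)
    _ = 2 * F + 1 := by ring

open Classical in
/-- The set `𝒩` of indices `j` such that `|ℛ_j| ≤ ⌊(L−K)/2⌋` and the label of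
`γ_j` is not in `ℛ_j` has cardinality at most `(L − K + 1)N`. -/
theorem card_N_le
    (N L K : ℕ) (hN : 1 ≤ N) (hK : 1 ≤ K) (hKL : K ≤ L)
    (δ : ℝ) (hδ : 0 < δ) (Γ : ℝ) (hΓ : Γ = 4 * N * δ)
    (G B : Finset (Fin L)) (hGB : G ∪ B = Finset.univ) (hGBdisj : Disjoint G B)
    (hB : B.card ≤ (L - K) / 2)
    (rc : Fin N → ℝ) (hrc : ∀ i, 0 ≤ rc i ∧ rc i < Γ)
    (Δ : Fin N → Fin L → ℝ) (hΔ : ∀ i, ∀ l ∈ G, |Δ i l| < δ)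
    (hΔdist : ∀ i, ∀ l ∈ G, ∀ l' ∈ G, Δ i l = Δ i l' → l = l')
    (tilde : Fin N → Fin L → ℝ)
    (htilde : ∀ i l, tilde i l = rmod Γ (rc i + Δ i l))
    (hinj : Function.Injective (fun p : Fin N × Fin L => tilde p.1 p.2))
    (γ : Fin (N * L) → ℝ) (hγmono : StrictMono γ)
    (hγrange : ∀ j, ∃ i l, γ j = tilde i l)
    (lbl : Fin (N * L) → Fin L) (hlbl : ∀ j, ∃ i, γ j = tilde i (lbl j))
    (R : Fin (N * L) → Finset (Fin L))
    (hR : ∀ j l, l ∈ R j ↔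
      ∃ i, 0 < rmod Γ (tilde i l - γ j) ∧ rmod Γ (tilde i l - γ j) ≤ 2 * δ) :
    (Finset.univ.filter
        (fun j : Fin (N * L) =>
          (R j).card ≤ (L - K) / 2 ∧ lbl j ∉ R j)).card ≤ (L - K + 1) * N :=
  card_N_le_general N L K hN δ hδ Γ hΓ G B hGB hB rc Δ hΔ hΔdist tilde htilde γ hγmono hγrange lbl R
    hR
end

section
/- Let L and K be integers with 1 ≤ K ≤ L < 2K, let δ > 0 be a real number, and let x_1, …, x_L be real numbers. Define ℋ := {l ∈ {1,…,L} : there exists y ∈ ℝ with y ≤ x_l ≤ y + 2δ such that |{l' ∈ {1,…,L} : y ≤ x_{l'} ≤ y + 2δ}| ≥ K}. Then for all l_1, l_2 ∈ ℋ, |x_{l_1} − x_{l_2}| ≤ 4δ. -/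
open Classical in
/-- The label `l` is retained if `x l` lies in some interval of length `2δ`
containing at least `K` of the `L` values. -/
def retained (L K : ℕ) (δ : ℝ) (x : Fin L → ℝ) (l : Fin L) : Prop :=
  ∃ y : ℝ, y ≤ x l ∧ x l ≤ y + 2 * δ ∧
    K ≤ (Finset.univ.filter (fun l' => y ≤ x l' ∧ x l' ≤ y + 2 * δ)).card

/-- When `2K > L`, any two retained values are within `4δ` of each other. -/
theorem retained_values_close
    (L K : ℕ) (hK : 1 ≤ K) (hKL : K ≤ L) (hL2K : L < 2 * K)
    (δ : ℝ) (hδ : 0 < δ) (x : Fin L → ℝ)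
    (l₁ l₂ : Fin L) (h₁ : retained L K δ x l₁) (h₂ : retained L K δ x l₂) :
    |x l₁ - x l₂| ≤ 4 * δ := by
  classical
  obtain ⟨y₁, hy₁l, hy₁r, hc₁⟩ := h₁
  obtain ⟨y₂, hy₂l, hy₂r, hc₂⟩ := h₂
  set A := Finset.univ.filter (fun l' => y₁ ≤ x l' ∧ x l' ≤ y₁ + 2 * δ) with hA
  set B := Finset.univ.filter (fun l' => y₂ ≤ x l' ∧ x l' ≤ y₂ + 2 * δ) with hB
  have hinter : (A ∩ B).Nonempty := by
    rw [← Finset.card_pos]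
    have hu : (A ∪ B).card ≤ L := by
      simpa using Finset.card_le_card (Finset.subset_univ (A ∪ B))
    have := Finset.card_union_add_card_inter A B
    omega
  obtain ⟨l', hl'⟩ := hinter
  simp only [hA, hB, Finset.mem_inter, Finset.mem_filter] at hl'
  obtain ⟨⟨-, ha1, ha2⟩, ⟨-, hb1, hb2⟩⟩ := hl'
  rw [abs_le]
  constructor <;> nlinarith
end

section
/- Let Γ > 0 be a real number, let n ≥ 1, let x_1, …, x_n be real numbers with max_l x_l − min_l x_l ≤ Γ/2, and let w_1, …, w_n be positive real weights. Set μ := (∑_{l=1}^n w_l x_l)/(∑_{l=1}^n w_l). Then μ ∈ [min_l x_l, max_l x_l], and for every x ∈ [min_l x_l, max_l x_l], ∑_{l=1}^n w_l · d_Γ(x_l, x)² ≥ ∑_{l=1}^n w_l · d_Γ(x_l, μ)²; that is, the weighted mean μ minimizes ∑_l w_l d_Γ(x_l, x)² over the interval [min_l x_l, max_l x_l]. -/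
/-- The circular distance modulo `Γ`: the minimal distance between the
residues of `X` and `Y` on the circle of circumference `Γ`. -/
noncomputable def circDist (Γ X Y : ℝ) : ℝ :=
  sInf {d : ℝ | ∃ z : ℤ, d = |X - Y + z * Γ|}

lemma circDist_eq_abs (Γ X Y : ℝ) (hΓ : 0 < Γ) (h : |X - Y| ≤ Γ / 2) :
    circDist Γ X Y = |X - Y| := by
  unfold circDist
  apply le_antisymm
  · have hmem : |X - Y| ∈ {d : ℝ | ∃ z : ℤ, d = |X - Y + z * Γ|} := ⟨0, by simp⟩
    have hbdd : BddBelow {d : ℝ | ∃ z : ℤ, d = |X - Y + z * Γ|} :=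
      ⟨0, by rintro d ⟨z, rfl⟩; exact abs_nonneg _⟩
    exact csInf_le hbdd hmem
  · have hne : Set.Nonempty {d : ℝ | ∃ z : ℤ, d = |X - Y + z * Γ|} := ⟨|X - Y|, 0, by simp⟩
    apply le_csInf hne
    rintro d ⟨z, rfl⟩
    rcases eq_or_ne z 0 with rfl | hz
    · simp
    · have h1 : (1 : ℝ) ≤ |(z : ℝ)| := by
        rw [← Int.cast_abs]; exact_mod_cast Int.one_le_abs hz
      have h2 : Γ ≤ |(z : ℝ) * Γ| := by
        rw [abs_mul, abs_of_pos hΓ]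
        nlinarith
      have := abs_sub_abs_le_abs_sub (z * Γ) (-(X - Y))
      rw [sub_neg_eq_add, abs_neg, add_comm] at this
      linarith

/-- If the points `x_1,…,x_n` span at most half the circle, the weighted mean
`μ = (∑ w_l x_l)/(∑ w_l)` lies in `[min x_l, max x_l]` and minimizes
`∑ w_l d_Γ(x_l, x)²` over that interval. -/
theorem weighted_mean_minimizes_circular_MLE
    (Γ : ℝ) (hΓ : 0 < Γ) (n : ℕ) (hn : 1 ≤ n)
    (x w : Fin n → ℝ) (hw : ∀ l, 0 < w l)
    (m M : ℝ)
    (hm : ∀ l, m ≤ x l) (hm' : ∃ l, x l = m)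
    (hM : ∀ l, x l ≤ M) (hM' : ∃ l, x l = M)
    (hrange : M - m ≤ Γ / 2) :
    (m ≤ (∑ l, w l * x l) / (∑ l, w l) ∧ (∑ l, w l * x l) / (∑ l, w l) ≤ M) ∧
    (∀ x₀ : ℝ, m ≤ x₀ → x₀ ≤ M →
      ∑ l, w l * (circDist Γ (x l) ((∑ l, w l * x l) / (∑ l, w l))) ^ 2 ≤
        ∑ l, w l * (circDist Γ (x l) x₀) ^ 2) := by
  have hne : (Finset.univ : Finset (Fin n)).Nonempty := by
    have : 0 < n := hn
    exact ⟨⟨0, this⟩, Finset.mem_univ _⟩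
  set S := ∑ l, w l with hS_def
  set T := ∑ l, w l * x l with hT_def
  have hS : 0 < S := Finset.sum_pos (fun l _ => hw l) hne
  have hmT : m * S ≤ T := by
    rw [Finset.mul_sum]
    exact Finset.sum_le_sum fun l _ => by
      rw [mul_comm]; exact mul_le_mul_of_nonneg_left (hm l) (hw l).le
  have hMT : T ≤ M * S := by
    rw [Finset.mul_sum]
    exact Finset.sum_le_sum fun l _ => by
      rw [mul_comm (M)]; exact mul_le_mul_of_nonneg_left (hM l) (hw l).le
  set μ := T / S with hμ_def
  have hμm : m ≤ μ := (le_div_iff₀ hS).mpr hmT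
  have hμM : μ ≤ M := (div_le_iff₀ hS).mpr hMT
  have hμS : μ * S = T := div_mul_cancel₀ T hS.ne'
  refine ⟨⟨hμm, hμM⟩, fun x₀ hx₀m hx₀M => ?_⟩
  have hd : ∀ (y : ℝ), m ≤ y → y ≤ M → ∀ l, circDist Γ (x l) y = |x l - y| := by
    intro y hy1 hy2 l
    apply circDist_eq_abs _ _ _ hΓ
    rw [abs_sub_le_iff]
    constructor <;> nlinarith [hm l, hM l]
  have expand : ∀ (y : ℝ), ∑ l, w l * |x l - y| ^ 2 =
      ∑ l, w l * (x l) ^ 2 - 2 * y * T + y ^ 2 * S := by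
    intro y
    have h1 : ∀ l ∈ Finset.univ, w l * |x l - y| ^ 2 =
        w l * (x l) ^ 2 - 2 * y * (w l * x l) + y ^ 2 * w l := fun l _ => by
      rw [sq_abs]; ring
    rw [Finset.sum_congr rfl h1, Finset.sum_add_distrib, Finset.sum_sub_distrib,
      ← Finset.mul_sum, ← Finset.mul_sum]
  calc ∑ l, w l * (circDist Γ (x l) μ) ^ 2
      = ∑ l, w l * |x l - μ| ^ 2 := by
        exact Finset.sum_congr rfl fun l _ => by rw [hd μ hμm hμM l]
    _ ≤ ∑ l, w l * |x l - x₀| ^ 2 := by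
        rw [expand, expand]
        nlinarith [sq_nonneg (μ - x₀), hS]
    _ = ∑ l, w l * (circDist Γ (x l) x₀) ^ 2 := by
        exact Finset.sum_congr rfl fun l _ => by rw [hd x₀ hx₀m hx₀M l]
end
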